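/- (Recursive identification step, first row) Let a fully-connected layered feed-forward network of depth L with one source and one sink have activation f(x) = e^x − 1, and let W, W̃ ∈ W_o be weight families whose measured functions satisfy F_W = F_{W̃}. Fix l ∈ {1,…,L} and j ∈ N^{l−1}. If w^l_{1j'} = w̃^l_{1j'} for all j' < j, and w^{l−1}_{j'k} = w̃^{l−1}_{j'k} for all j' ≤ j and all k ∈ N^{l−2}, and w^{l'}_{kk'} = w̃^{l'}_{kk'} for all l' < l−1 and all k, k', then w^l_{1j} = w̃^l_{1j}. -/

import Mathlib

open Finset Filter

/-- Node outputs of the fully-connected layered feed-forward network with activation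
`f x = e^x - 1` and layer sizes `n 0, …, n L`: `expOut n w 0 i x = x` (the source) and
`expOut n w (l+1) i x = exp (∑_{j < n l} w^{l+1}_{ij} · expOut n w l j x) - 1`, where
`w (l+1) i j` is the weight of the edge from node `j` of layer `l` to node `i` of layer
`l + 1` (nodes are numbered `0, …, n l - 1`; the "first" node of a layer is node `0`). -/
noncomputable def expOut (n : ℕ → ℕ) (w : ℕ → ℕ → ℕ → ℝ) : ℕ → ℕ → ℝ → ℝ
  | 0, _, x => x
  | l + 1, i, x =>
      Real.exp (∑ j ∈ Finset.range (n l), w (l + 1) i j * expOut n w l j x) - 1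

/-- The class `W_o` of weight families: all weights are positive and, in each layer and for
each source node `j`, the weights are strictly decreasing in the destination node index
(`w^l_{1j} > w^l_{2j} > … > w^l_{n_l j}` in 1-based notation). -/
def Wo (L : ℕ) (n : ℕ → ℕ) (w : ℕ → ℕ → ℕ → ℝ) : Prop :=
  (∀ l < L, ∀ i < n (l + 1), ∀ j < n l, 0 < w (l + 1) i j) ∧
  (∀ l < L, ∀ j < n l, ∀ i i' : ℕ, i < i' → i' < n (l + 1) → w (l + 1) i' j < w (l + 1) i j)

/-!
Write `z^m_i` for the input of node `i` of layer `m`, so that `F^m_i = e^{z^m_i} - 1`. In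
`z^{m+1}_1 = ∑_k w^{m+1}_{1k} (e^{z^m_k} - 1)` the first term dominates, because the ordering of
the rows makes `z^m_1 - z^m_k → ∞`; hence `log z^{m+1}_1 - z^m_1 → log w^{m+1}_{11}`. Taking
iterated logarithms of the common output `F_W = F_{W̃}` therefore shows that `z^l_1 - z̃^l_1`
converges. In this difference the terms with `k < j` cancel, the term `k = j` is
`(w^l_{1j} - w̃^l_{1j}) F^{l-1}_j`, and the terms with `k > j` are `o(F^{l-1}_j)`; dividing by
`F^{l-1}_j → ∞` gives `w^l_{1j} = w̃^l_{1j}`.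
-/

open Real Topology

section Asymptotics

variable {ι α : Type*} {l : Filter α}

lemma tendsto_sum_mul_atTop {s : Finset ι} {i₀ : ι} (hi₀ : i₀ ∈ s) {c : ι → ℝ}
    {F : ι → α → ℝ} (hc : ∀ i ∈ s, 0 < c i) (hF : ∀ i ∈ s, Tendsto (F i) l atTop) :
    Tendsto (fun x => ∑ i ∈ s, c i * F i x) l atTop := by
  refine tendsto_atTop_mono' l ?_ ((hF i₀ hi₀).const_mul_atTop (hc i₀ hi₀))
  have hnonneg : ∀ᶠ x in l, ∀ i ∈ s, 0 ≤ F i x :=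
    (eventually_all_finset s).2 fun i hi => (hF i hi).eventually_ge_atTop 0
  filter_upwards [hnonneg] with x hx
  exact single_le_sum (f := fun i => c i * F i x)
    (fun i hi => mul_nonneg (hc i hi).le (hx i hi)) hi₀

lemma tendsto_exp_sub_one_div_exp {f g : α → ℝ} (hf : Tendsto f l atTop)
    (hfg : Tendsto (fun x => f x - g x) l atTop) :
    Tendsto (fun x => (exp (g x) - 1) / exp (f x)) l (𝓝 0) := by
  have hgf : Tendsto (fun x => exp (g x - f x)) l (𝓝 0) := by
    simpa only [tendsto_exp_comp_nhds_zero, ← neg_sub (f _), tendsto_neg_atBot_iff]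
  have hf' : Tendsto (fun x => exp (-f x)) l (𝓝 0) := by
    simpa only [tendsto_exp_comp_nhds_zero, tendsto_neg_atBot_iff]
  simpa only [sub_zero, sub_div, ← exp_sub, one_div, ← exp_neg, sub_eq_add_neg (g _)]
    using hgf.sub hf'

lemma tendsto_exp_sub_one_div_exp_self {f : α → ℝ} (hf : Tendsto f l atTop) :
    Tendsto (fun x => (exp (f x) - 1) / exp (f x)) l (𝓝 1) := by
  have hf' : Tendsto (fun x => exp (-f x)) l (𝓝 0) := by
    simpa only [tendsto_exp_comp_nhds_zero, tendsto_neg_atBot_iff]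
  simpa only [sub_zero, sub_div, div_self (exp_ne_zero _), one_div, ← exp_neg]
    using tendsto_const_nhds (x := (1 : ℝ)).sub hf'

lemma tendsto_exp_sub_one_div_exp_sub_one {f g : α → ℝ} (hf : Tendsto f l atTop)
    (hfg : Tendsto (fun x => f x - g x) l atTop) :
    Tendsto (fun x => (exp (g x) - 1) / (exp (f x) - 1)) l (𝓝 0) := by
  have h := (tendsto_exp_sub_one_div_exp hf hfg).div (tendsto_exp_sub_one_div_exp_self hf)
    one_ne_zero
  rw [zero_div] at h
  exact h.congr fun x => div_div_div_cancel_right₀ (exp_ne_zero _) _ _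

lemma tendsto_log_sub_of_tendsto_div_exp {f g h : α → ℝ} {a c : ℝ} (hf : Tendsto f l atTop)
    (hgh : Tendsto (fun x => g x - h x) l (𝓝 c)) (hh : Tendsto (fun x => h x / exp (f x)) l (𝓝 a))
    (ha : 0 < a) : Tendsto (fun x => log (g x) - f x) l (𝓝 (log a)) := by
  have hg : Tendsto (fun x => g x / exp (f x)) l (𝓝 a) := by
    have h0 : Tendsto (fun x => (g x - h x) / exp (f x)) l (𝓝 0) := by
      simpa only [mul_zero, div_eq_mul_inv, Pi.inv_apply, Function.comp_apply] using
        hgh.mul (tendsto_exp_atTop.comp hf).inv_tendsto_atTop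
    simpa only [zero_add, ← add_div, sub_add_cancel] using h0.add hh
  refine (hg.log ha.ne').congr' ?_
  filter_upwards [hg.eventually (lt_mem_nhds ha)] with x hx
  have hgx : 0 < g x := by simpa only [div_pos_iff_of_pos_right (exp_pos _)] using hx
  rw [log_div hgx.ne' (exp_ne_zero _), log_exp]

lemma eq_of_tendsto_sum_mul_sub_sum_mul [l.NeBot] {N j : ℕ} (hj : j < N) {a b : ℕ → ℝ}
    {F G : ℕ → α → ℝ} {c : ℝ} (hab : ∀ k < j, a k = b k) (hFG : ∀ k ≤ j, F k = G k)
    (hFj : Tendsto (F j) l atTop)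
    (hF : ∀ k, j < k → k < N → Tendsto (fun x => F k x / F j x) l (𝓝 0))
    (hG : ∀ k, j < k → k < N → Tendsto (fun x => G k x / G j x) l (𝓝 0))
    (hlim : Tendsto (fun x => ∑ k ∈ range N, a k * F k x - ∑ k ∈ range N, b k * G k x) l (𝓝 c)) :
    a j = b j := by
  have hterm : ∀ k ∈ range N, Tendsto (fun x => (a k * F k x - b k * G k x) / F j x) l
      (𝓝 (if k = j then a j - b j else 0)) := by
    intro k hk
    rcases lt_trichotomy k j with hkj | rfl | hjk
    · simp only [hkj.ne, if_false, hab k hkj, hFG k hkj.le, sub_self, zero_div]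
      exact tendsto_const_nhds
    · rw [if_pos rfl, ← hFG k le_rfl]
      refine tendsto_const_nhds.congr' ?_
      filter_upwards [hFj.eventually_ne_atTop 0] with x hx
      rw [← sub_mul, mul_div_cancel_right₀ _ hx]
    · rw [if_neg hjk.ne']
      have hGk := hG k hjk (mem_range.1 hk)
      rw [← hFG j le_rfl] at hGk
      simpa only [mul_zero, sub_zero, sub_div, mul_div_assoc] using
        ((hF k hjk (mem_range.1 hk)).const_mul (a k)).sub (hGk.const_mul (b k))
  have hsum := tendsto_finsetSum _ hterm
  rw [sum_ite_eq', if_pos (mem_range.2 hj)] at hsum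
  have hzero : Tendsto (fun x => ∑ k ∈ range N, (a k * F k x - b k * G k x) / F j x) l (𝓝 0) := by
    simpa only [mul_zero, sum_mul, ← sum_sub_distrib, div_eq_mul_inv, Pi.inv_apply] using
      hlim.mul hFj.inv_tendsto_atTop
  exact sub_eq_zero.1 (tendsto_nhds_unique hsum hzero)

end Asymptotics

/-- The input of node `i` of layer `p + 1` (indexed by the layer it is computed from). -/
noncomputable def preActivation (n : ℕ → ℕ) (w : ℕ → ℕ → ℕ → ℝ) (p i : ℕ) (x : ℝ) : ℝ :=
  ∑ k ∈ range (n p), w (p + 1) i k * expOut n w p k x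

section Network

variable {L : ℕ} {n : ℕ → ℕ} {w w' : ℕ → ℕ → ℕ → ℝ}

lemma expOut_succ (p i : ℕ) (x : ℝ) :
    expOut n w (p + 1) i x = exp (preActivation n w p i x) - 1 :=
  rfl

lemma expOut_succ_congr {p i : ℕ} (hw : ∀ k < n p, w (p + 1) i k = w' (p + 1) i k)
    (hF : ∀ k < n p, expOut n w p k = expOut n w' p k) :
    expOut n w (p + 1) i = expOut n w' (p + 1) i := by
  funext x
  simp only [expOut_succ, preActivation]
  congr 2
  exact sum_congr rfl fun k hk => by rw [hw k (mem_range.1 hk), hF k (mem_range.1 hk)]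

lemma expOut_congr {m : ℕ}
    (hw : ∀ p < m, ∀ i < n (p + 1), ∀ k < n p, w (p + 1) i k = w' (p + 1) i k) :
    ∀ i < n m, expOut n w m i = expOut n w' m i := by
  induction m with
  | zero => exact fun _ _ => rfl
  | succ p ih =>
    exact fun i hi => expOut_succ_congr (hw p p.lt_succ_self i hi)
      (ih fun q hq => hw q (hq.trans p.lt_succ_self))

lemma tendsto_expOut_atTop (hpos : ∀ l ≤ L, 0 < n l) (hw : Wo L n w) :
    ∀ m ≤ L, ∀ i < n m, Tendsto (expOut n w m i) atTop atTop := by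
  intro m
  induction m with
  | zero => exact fun _ _ _ => tendsto_id
  | succ p ih =>
    intro hp i hi
    have hS : Tendsto (preActivation n w p i) atTop atTop :=
      tendsto_sum_mul_atTop (mem_range.2 (hpos p (by omega)))
        (fun k hk => hw.1 p hp i hi k (mem_range.1 hk))
        (fun k hk => ih (by omega) k (mem_range.1 hk))
    show Tendsto (fun x => exp (preActivation n w p i x) - 1) atTop atTop
    simpa only [sub_eq_add_neg, Function.comp_apply] using
      tendsto_atTop_add_const_right atTop (-1) (tendsto_exp_atTop.comp hS)

lemma tendsto_preActivation_atTop (hpos : ∀ l ≤ L, 0 < n l) (hw : Wo L n w) {p i : ℕ}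
    (hp : p < L) (hi : i < n (p + 1)) : Tendsto (preActivation n w p i) atTop atTop :=
  tendsto_sum_mul_atTop (mem_range.2 (hpos p hp.le))
    (fun k hk => hw.1 p hp i hi k (mem_range.1 hk))
    (fun k hk => tendsto_expOut_atTop hpos hw p hp.le k (mem_range.1 hk))

lemma tendsto_preActivation_sub_atTop (hpos : ∀ l ≤ L, 0 < n l) (hw : Wo L n w) {p i i' : ℕ}
    (hp : p < L) (hii' : i < i') (hi' : i' < n (p + 1)) :
    Tendsto (fun x => preActivation n w p i x - preActivation n w p i' x) atTop atTop := by
  simp only [preActivation, ← sum_sub_distrib, ← sub_mul]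
  exact tendsto_sum_mul_atTop (mem_range.2 (hpos p hp.le))
    (fun k hk => sub_pos.2 (hw.2 p hp k (mem_range.1 hk) i i' hii' hi'))
    (fun k hk => tendsto_expOut_atTop hpos hw p hp.le k (mem_range.1 hk))

lemma tendsto_expOut_div_expOut (hn0 : n 0 = 1) (hpos : ∀ l ≤ L, 0 < n l) (hw : Wo L n w)
    {m j k : ℕ} (hm : m ≤ L) (hjk : j < k) (hk : k < n m) :
    Tendsto (fun x => expOut n w m k x / expOut n w m j x) atTop (𝓝 0) := by
  cases m with
  | zero => omega
  | succ p =>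
    simp only [expOut_succ]
    exact tendsto_exp_sub_one_div_exp_sub_one
      (tendsto_preActivation_atTop hpos hw (by omega) (hjk.trans hk))
      (tendsto_preActivation_sub_atTop hpos hw (by omega) hjk hk)

lemma tendsto_preActivation_succ_div_exp (hpos : ∀ l ≤ L, 0 < n l) (hw : Wo L n w) {p : ℕ}
    (hp : p + 1 < L) :
    Tendsto (fun x => preActivation n w (p + 1) 0 x / exp (preActivation n w p 0 x)) atTop
      (𝓝 (w (p + 2) 0 0)) := by
  have hS := tendsto_preActivation_atTop hpos hw (i := 0) (by omega) (hpos (p + 1) (by omega))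
  have hterm : ∀ k ∈ range (n (p + 1)), Tendsto
      (fun x => w (p + 2) 0 k * expOut n w (p + 1) k x / exp (preActivation n w p 0 x)) atTop
      (𝓝 (if k = 0 then w (p + 2) 0 0 else 0)) := by
    intro k hk
    simp only [mul_div_assoc, expOut_succ]
    rcases Nat.eq_zero_or_pos k with rfl | hk0
    · simpa using (tendsto_exp_sub_one_div_exp_self hS).const_mul (w (p + 2) 0 0)
    · simpa [hk0.ne'] using (tendsto_exp_sub_one_div_exp hS
        (tendsto_preActivation_sub_atTop hpos hw (by omega) hk0 (mem_range.1 hk))).const_mul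
        (w (p + 2) 0 k)
  have hsum := tendsto_finsetSum _ hterm
  rw [sum_ite_eq', if_pos (mem_range.2 (hpos (p + 1) (by omega)))] at hsum
  exact hsum.congr fun x => (sum_div _ _ _).symm

lemma tendsto_iterate_log_preActivation_sub (hpos : ∀ l ≤ L, 0 < n l) (hw : Wo L n w) :
    ∀ d m, m + d < L → ∃ c, Tendsto
      (fun x => log^[d] (preActivation n w (m + d) 0 x) - preActivation n w m 0 x) atTop (𝓝 c) := by
  intro d
  induction d with
  | zero => exact fun _ _ => ⟨0, by simp⟩
  | succ d ih =>
    intro m hm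
    obtain ⟨c, hc⟩ := ih (m + 1) (by omega)
    refine ⟨log (w (m + 2) 0 0), ?_⟩
    have := tendsto_log_sub_of_tendsto_div_exp
      (tendsto_preActivation_atTop hpos hw (i := 0) (by omega) (hpos (m + 1) (by omega))) hc
      (tendsto_preActivation_succ_div_exp hpos hw (p := m) (by omega))
      (hw.1 (m + 1) (by omega) 0 (hpos (m + 2) (by omega)) 0 (hpos (m + 1) (by omega)))
    rw [show m + (d + 1) = m + 1 + d by omega]
    simpa only [Function.iterate_succ_apply'] using this

end Network

theorem stmt_14_general (L : ℕ) (hL : 1 ≤ L) (n : ℕ → ℕ) (hn0 : n 0 = 1)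
    (hpos : ∀ l ≤ L, 0 < n l)
    (w w' : ℕ → ℕ → ℕ → ℝ) (hw : Wo L n w) (hw' : Wo L n w')
    (hF : ∀ x : ℝ, expOut n w L 0 x = expOut n w' L 0 x)
    (l : ℕ) (hl1 : 1 ≤ l) (hlL : l ≤ L) (j : ℕ) (hj : j < n (l - 1))
    (h1 : ∀ j' < j, w l 0 j' = w' l 0 j')
    (h2 : 2 ≤ l → ∀ j' ≤ j, ∀ k < n (l - 2), w (l - 1) j' k = w' (l - 1) j' k)
    (h3 : ∀ l', 1 ≤ l' → l' + 1 < l → ∀ k < n l', ∀ k' < n (l' - 1),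
      w l' k k' = w' l' k k') :
    w l 0 j = w' l 0 j := by
  obtain ⟨p, rfl⟩ : ∃ p, l = p + 1 := ⟨l - 1, by omega⟩
  simp only [Nat.add_sub_cancel] at hj h2
  have hIn : ∀ x, preActivation n w (L - 1) 0 x = preActivation n w' (L - 1) 0 x := by
    intro x
    have := hF x
    rwa [← Nat.sub_add_cancel hL, expOut_succ, expOut_succ, sub_left_inj, exp_eq_exp] at this
  obtain ⟨c, hc⟩ := tendsto_iterate_log_preActivation_sub hpos hw (L - (p + 1)) p (by omega)
  obtain ⟨c', hc'⟩ := tendsto_iterate_log_preActivation_sub hpos hw' (L - (p + 1)) p (by omega)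
  rw [show p + (L - (p + 1)) = L - 1 by omega] at hc hc'
  have hlim := hc'.sub hc
  simp only [hIn, sub_sub_sub_cancel_left] at hlim
  have hout : ∀ k ≤ j, expOut n w p k = expOut n w' p k := by
    cases p with
    | zero => exact fun _ _ => rfl
    | succ q =>
      intro k hk
      refine expOut_succ_congr (h2 (by omega) k hk) (expOut_congr fun r hr i hi k' hk' => ?_)
      exact h3 (r + 1) (by omega) (by omega) i hi k' hk'
  exact eq_of_tendsto_sum_mul_sub_sum_mul hj h1 hout
    (tendsto_expOut_atTop hpos hw p (by omega) j hj)
    (fun k hjk hk => tendsto_expOut_div_expOut hn0 hpos hw (by omega) hjk hk)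
    (fun k hjk hk => tendsto_expOut_div_expOut hn0 hpos hw' (by omega) hjk hk) hlim

/-- **(Recursive identification step, first row, eq. rec_cond1).** Let a fully-connected
layered feed-forward network of depth `L ≥ 1` with one source and one sink have activation
`f x = e^x - 1`, and let `W, W̃ ∈ W_o` have the same measured function. Fix a layer
`l ∈ {1, …, L}` and a node `j` of layer `l - 1`. If the first-row weights `w^l_{1 j'}`
agree for all `j' < j`, the weights `w^{l-1}_{j' k}` agree for all `j' ≤ j` and all
`k ∈ N^{l-2}`, and all weights of layers `l' < l - 1` agree, then `w^l_{1 j} = w̃^l_{1 j}`.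
(Nodes are 0-indexed, so the first row is `i = 0`.) -/
theorem stmt_14 (L : ℕ) (hL : 1 ≤ L) (n : ℕ → ℕ) (hn0 : n 0 = 1) (hnL : n L = 1)
    (hpos : ∀ l ≤ L, 0 < n l)
    (w w' : ℕ → ℕ → ℕ → ℝ) (hw : Wo L n w) (hw' : Wo L n w')
    (hF : ∀ x : ℝ, expOut n w L 0 x = expOut n w' L 0 x)
    (l : ℕ) (hl1 : 1 ≤ l) (hlL : l ≤ L) (j : ℕ) (hj : j < n (l - 1))
    (h1 : ∀ j' < j, w l 0 j' = w' l 0 j')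
    (h2 : 2 ≤ l → ∀ j' ≤ j, ∀ k < n (l - 2), w (l - 1) j' k = w' (l - 1) j' k)
    (h3 : ∀ l', 1 ≤ l' → l' + 1 < l → ∀ k < n l', ∀ k' < n (l' - 1),
      w l' k k' = w' l' k k') :
    w l 0 j = w' l 0 j :=
  stmt_14_general L hL n hn0 hpos w w' hw hw' hF l hl1 hlL j hj h1 h2 h3
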